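/- arXiv:0910.3830 — 4 statements merged into one kernel-verified Lean document; each statement's English description precedes it below -/
import Mathlib

section
/- Let I be a strongly stable monomial ideal in k[x_1,...,x_n] and suppose max(M_ω(I)) = n, where M_ω(I) is the last generator of I. If M is a monomial of degree d lying in (I : x_n) whose image in (I : x_n)/I is nonzero (i.e., M ∉ I but M·x_n ∈ I), then M·x_n is a minimal generator of I. -/
open scoped Classical

/-- Degree of an exponent vector (monomial). -/
def mdeg {n : ℕ} (m : Fin n → ℕ) : ℕ := ∑ i, m i

/-- Degree reverse lexicographic order: `M > N`. -/
def RevLexGT {n : ℕ} (M N : Fin n → ℕ) : Prop :=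
  mdeg N < mdeg M ∨
    (mdeg M = mdeg N ∧ ∃ s : Fin n, (∀ i : Fin n, s < i → M i = N i) ∧ M s < N s)

/-- A monomial ideal, identified with its set of monomials (exponent vectors),
is upward closed under divisibility. -/
def MonIdeal {n : ℕ} (I : Set (Fin n → ℕ)) : Prop :=
  ∀ m ∈ I, ∀ m' : Fin n → ℕ, (∀ i, m i ≤ m' i) → m' ∈ I

/-- `m` is a minimal generator of the monomial ideal `I`. -/
def MinGen {n : ℕ} (I : Set (Fin n → ℕ)) (m : Fin n → ℕ) : Prop :=
  m ∈ I ∧ ∀ m' ∈ I, (∀ i, m' i ≤ m i) → m' = m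

/-- Almost reverse lexicographic ideal. -/
def ARL {n : ℕ} (I : Set (Fin n → ℕ)) : Prop :=
  ∀ M N : Fin n → ℕ, MinGen I N → mdeg M = mdeg N → RevLexGT M N → M ∈ I

/-- Strongly stable monomial ideal. -/
def StronglyStable {n : ℕ} (I : Set (Fin n → ℕ)) : Prop :=
  MonIdeal I ∧ ∀ M ∈ I, ∀ i j : Fin n, j < i → 0 < M i →
    (fun k => if k = i then M i - 1 else if k = j then M j + 1 else M k) ∈ I

/-- The last generator `M_ω` of a monomial ideal: a minimal generator of maximal
degree which is smallest in the degree reverse lexicographic order among the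
minimal generators of that degree. -/
def IsLastGen {n : ℕ} (I : Set (Fin n → ℕ)) (W : Fin n → ℕ) : Prop :=
  MinGen I W ∧ (∀ N, MinGen I N → mdeg N ≤ mdeg W) ∧
    (∀ N, MinGen I N → mdeg N = mdeg W → N = W ∨ RevLexGT N W)

/-- `max M`: the largest (1-based) index of a variable dividing `M` (0 for `M = 1`). -/
def maxVar {n : ℕ} (m : Fin n → ℕ) : ℕ :=
  Finset.univ.sup (fun i : Fin n => if 0 < m i then i.1 + 1 else 0)

/-- Hilbert function of `R/I`: the number of monomials of degree `d` not in `I`. -/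
noncomputable def hilb {n : ℕ} (I : Set (Fin n → ℕ)) (d : ℕ) : ℕ :=
  Set.ncard {m : Fin n → ℕ | mdeg m = d ∧ m ∉ I}

/-- Truncation of an exponent vector to its first `i` coordinates. -/
def truncW {n : ℕ} (W : Fin n → ℕ) (i : ℕ) : Fin n → ℕ :=
  fun j => if j.1 < i then W j else 0

/-- The set `𝓘_i` (for `i ≤ μ-2`): exponent vectors supported on the first `i`
coordinates, coordinatewise below the `f_j`'s, i.e. not lying in `I`. -/
def Iset {n : ℕ} (I : Set (Fin n → ℕ)) (i : ℕ) : Set (Fin n → ℕ) :=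
  {α | (∀ k : Fin n, i ≤ k.1 → α k = 0) ∧ α ∉ I}

/-- The set `𝓘_{μ-1}`, which additionally requires `α ≥ (ω_1,…,ω_{μ-1})`. -/
def IsetLast {n : ℕ} (I : Set (Fin n → ℕ)) (W : Fin n → ℕ) (μ : ℕ) :
    Set (Fin n → ℕ) :=
  {α | α ∈ Iset I (μ - 1) ∧ (α = truncW W (μ - 1) ∨ RevLexGT α (truncW W (μ - 1)))}

/-- `f_{i+1}(α) = min {t : x^α x_{i+1}^t ∈ I}` (ℕ-valued, junk `0` if no such `t`). -/
noncomputable def fmin {n : ℕ} (I : Set (Fin n → ℕ)) (α : Fin n → ℕ) (i : Fin n) : ℕ :=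
  sInf {t | α + Pi.single i t ∈ I}

/-- `f_{i+1}(α)` valued in `ℕ∞` (equal to `⊤` when no power works). -/
noncomputable def fminTop {n : ℕ} (I : Set (Fin n → ℕ)) (α : Fin n → ℕ) (i : Fin n) : ℕ∞ :=
  sInf ((fun t : ℕ => (t : ℕ∞)) '' {t | α + Pi.single i t ∈ I})

/-- Iterated truncated difference sequence `h^{(i)}`. -/
def hseq (h : ℕ → ℕ) : ℕ → ℕ → ℕ
  | 0, d => h d
  | _ + 1, 0 => 1
  | i + 1, e + 1 => hseq h i (e + 1) - hseq h i e

/-- The set whose infimum is `r_i(h)`. -/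
def rset (h : ℕ → ℕ) (i : ℕ) : Set ℕ :=
  {d | 1 ≤ d ∧ hseq h i d ≤ hseq h i (d - 1)}

/-- `D(h) = min {i : r_i < ∞}`. -/
noncomputable def Dval (h : ℕ → ℕ) : ℕ := sInf {i | (rset h i).Nonempty}

/-- `h` is unimodal at each tail. -/
def UnimodalAtTails (h : ℕ → ℕ) : Prop :=
  ∀ i, Dval h ≤ i → i < max 1 (h 1) →
    ∀ d, (∃ r ∈ rset h i, r ≤ d) → hseq h i d ≤ hseq h i (d - 1)

/-- The polynomial `Π (1 - z^{d_i})`. -/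
noncomputable def froPoly (ds : List ℕ) : Polynomial ℤ :=
  (ds.map (fun d => 1 - Polynomial.X ^ d)).prod

/-- Coefficient of `z^i` in the power series `Π (1 - z^{d_i}) / (1-z)^n`. -/
noncomputable def froCoeff (n : ℕ) (ds : List ℕ) (i : ℕ) : ℤ :=
  ∑ j ∈ Finset.range (i + 1),
    (froPoly ds).coeff j * (Nat.choose (n - 1 + (i - j)) (i - j) : ℤ)

/-- The Fröberg sequence `|n; d_1,…,d_m|`: the truncation `| · |` of the power
series `Π (1 - z^{d_i}) / (1-z)^n`. -/
noncomputable def fro (n : ℕ) (ds : List ℕ) (i : ℕ) : ℕ :=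
  if ∀ j ≤ i, 0 < froCoeff n ds j then (froCoeff n ds i).toNat else 0

/-! Were `M·x_n / x_i` in `I` for some `i < n`, strong stability would trade that `x_i` back
for the `x_n` and put `M` in `I`; for `i = n` the quotient is `M` itself. -/

theorem MinGen.of_forall_sub_single_notMem {n : ℕ} {I : Set (Fin n → ℕ)} (hI : MonIdeal I)
    {m : Fin n → ℕ} (hm : m ∈ I) (hmin : ∀ i, 0 < m i → m - Pi.single i 1 ∉ I) :
    MinGen I m := by
  refine ⟨hm, fun m' hm' hle => ?_⟩
  by_contra hne
  obtain ⟨i, hi⟩ : ∃ i, m' i < m i := by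
    by_contra! hge
    exact hne (funext fun i => le_antisymm (hle i) (hge i))
  refine hmin i (by omega) (hI m' hm' _ fun k => ?_)
  by_cases hk : k = i
  · subst hk; simp only [Pi.sub_apply, Pi.single_eq_same]; omega
  · simpa [hk] using hle k

theorem StronglyStable.mem_of_add_single_sub_single {n : ℕ} {I : Set (Fin n → ℕ)}
    (hI : StronglyStable I) {m : Fin n → ℕ} {i j : Fin n} (hji : j < i) (hj : 0 < m j)
    (h : m + Pi.single i 1 - Pi.single j 1 ∈ I) : m ∈ I := by
  have hij : i ≠ j := hji.ne'
  convert hI.2 _ h i j hji (by simp [hij.symm]) using 1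
  funext k
  by_cases hki : k = i
  · subst hki; simp [hij]
  · by_cases hkj : k = j
    · subst hkj
      simp only [hki, ↓reduceIte, Pi.sub_apply, Pi.add_apply, ne_eq, not_false_eq_true,
        Pi.single_eq_of_ne, add_zero, Pi.single_eq_same]
      omega
    · simp [hki, hkj]

theorem colon_gives_minimal_generator_general {n : ℕ} (I : Set (Fin (n + 1) → ℕ))
    (hI : StronglyStable I) (M : Fin (n + 1) → ℕ)
    (hM : M ∉ I) (hMx : M + Pi.single (Fin.last n) 1 ∈ I) :
    MinGen I (M + Pi.single (Fin.last n) 1) := by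
  refine MinGen.of_forall_sub_single_notMem hI.1 hMx fun i hi hmem => hM ?_
  by_cases hlast : i = Fin.last n
  · subst hlast
    simpa using hmem
  · have hMi : 0 < M i := by simpa [hlast] using hi
    exact hI.mem_of_add_single_sub_single (Fin.lt_last_iff_ne_last.mpr hlast) hMi hmem

/-- If `I` is strongly stable with `max M_ω(I) = n`, `M ∉ I` and
`M·x_n ∈ I`, then `M·x_n` is a minimal generator of `I`. -/
theorem colon_gives_minimal_generator {n : ℕ} (I : Set (Fin (n + 1) → ℕ))
    (hI : StronglyStable I) (W : Fin (n + 1) → ℕ) (hW : IsLastGen I W)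
    (hWn : maxVar W = n + 1) (M : Fin (n + 1) → ℕ)
    (hM : M ∉ I) (hMx : M + Pi.single (Fin.last n) 1 ∈ I) :
    MinGen I (M + Pi.single (Fin.last n) 1) :=
  colon_gives_minimal_generator_general I hI M hM hMx
end

section
/- Let I be a strongly stable monomial ideal in R = k[x_1,...,x_n] with max(M_ω(I)) = n. Then for each d ≥ 0, the k-vector space dimension of ((I : x_n)/I)_d equals the number of minimal generators N of I with max N = n and deg N = d+1. -/
open scoped Classical

/-! A monomial `N ∈ I` is a minimal generator iff `N / x_i ∉ I` for every `x_i ∣ N`. When `I` is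
strongly stable and `x_n ∣ N`, the exchange `x_n ↦ x_i` turns `N / x_i ∈ I` into `N / x_n ∈ I`,
so only `x_i = x_n` needs checking: the minimal generators with `max N = n` are exactly the
`m x_n` with `m ∉ I`, `m x_n ∈ I`, and `m ↦ m x_n` raises the degree by one. -/

lemma mdeg_add {n : ℕ} (m m' : Fin n → ℕ) : mdeg (m + m') = mdeg m + mdeg m' :=
  Finset.sum_add_distrib

lemma mdeg_single {n : ℕ} (i : Fin n) (k : ℕ) : mdeg (Pi.single i k) = k := by
  simp [mdeg]

lemma maxVar_eq_succ_iff {n : ℕ} (m : Fin (n + 1) → ℕ) :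
    maxVar m = n + 1 ↔ 0 < m (Fin.last n) := by
  constructor
  · intro h
    by_contra hlast
    have : maxVar m ≤ n := Finset.sup_le fun i _ => by
      split_ifs with hi
      · have := Fin.val_lt_last (i := i) (by rintro rfl; exact hlast hi)
        omega
      · exact Nat.zero_le n
    omega
  · intro h
    refine le_antisymm (Finset.sup_le fun i _ => ?_) ?_
    · have := i.isLt
      split_ifs <;> omega
    · have := Finset.le_sup (f := fun i : Fin (n + 1) => if 0 < m i then i.1 + 1 else 0)
        (Finset.mem_univ (Fin.last n))
      simp only [h, if_true, Fin.val_last] at this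
      exact this

lemma sub_single_add_single {n : ℕ} {N : Fin n → ℕ} {i : Fin n} (h : 0 < N i) :
    N - Pi.single i 1 + Pi.single i 1 = N := by
  ext k
  rcases eq_or_ne k i with rfl | hk
  · simp only [Pi.add_apply, Pi.sub_apply, Pi.single_eq_same]; omega
  · simp [hk]

lemma MonIdeal.minGen_iff {n : ℕ} {I : Set (Fin n → ℕ)} (hI : MonIdeal I) {N : Fin n → ℕ} :
    MinGen I N ↔ N ∈ I ∧ ∀ i, 0 < N i → N - Pi.single i 1 ∉ I := by
  refine ⟨fun hN => ⟨hN.1, fun i hi hmem => ?_⟩, fun ⟨hN, hmin⟩ => ⟨hN, fun m hm hle => ?_⟩⟩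
  · have := congrFun (hN.2 _ hmem fun k => tsub_le_self) i
    simp only [Pi.sub_apply, Pi.single_eq_same] at this
    omega
  · by_contra hne
    obtain ⟨i, hi⟩ : ∃ i, m i < N i := by
      by_contra! h
      exact hne (funext fun k => le_antisymm (hle k) (h k))
    refine hmin i (by omega) (hI m hm _ fun k => ?_)
    rcases eq_or_ne k i with rfl | hk
    · simp only [Pi.sub_apply, Pi.single_eq_same]; omega
    · simpa [hk] using hle k

lemma StronglyStable.sub_single_add_single_mem {n : ℕ} {I : Set (Fin n → ℕ)}
    (hI : StronglyStable I) {M : Fin n → ℕ} (hM : M ∈ I) {i j : Fin n} (hji : j < i)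
    (hi : 0 < M i) : M - Pi.single i 1 + Pi.single j 1 ∈ I := by
  convert hI.2 M hM i j hji hi using 1
  ext k
  rcases eq_or_ne k i with rfl | hki
  · simp [hji.ne]
  · rcases eq_or_ne k j with rfl | hkj
    · simp [hki]
    · simp [hki, hkj]

lemma StronglyStable.minGen_add_single_last {n : ℕ} {I : Set (Fin (n + 1) → ℕ)}
    (hI : StronglyStable I) {m : Fin (n + 1) → ℕ} (hm : m ∉ I)
    (hmx : m + Pi.single (Fin.last n) 1 ∈ I) :
    MinGen I (m + Pi.single (Fin.last n) 1) := by
  refine hI.1.minGen_iff.2 ⟨hmx, fun i hi hmem => hm ?_⟩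
  rcases eq_or_ne i (Fin.last n) with rfl | hne
  · simpa using hmem
  · convert hI.sub_single_add_single_mem hmem (Fin.lt_last_iff_ne_last.2 hne) (by simp [hne])
      using 1
    ext k
    rcases eq_or_ne k i with rfl | hki
    · simp only [ne_eq, hne, not_false_eq_true, Pi.add_apply, Pi.single_eq_of_ne] at hi
      simp only [Pi.add_apply, Pi.sub_apply, hne, Pi.single_eq_of_ne, Ne, not_false_eq_true,
        add_zero, Pi.single_eq_same, tsub_zero]
      omega
    · rcases eq_or_ne k (Fin.last n) with rfl | hkl
      · simp [hne.symm]
      · simp [hki, hkl]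

theorem colon_dim_eq_card_min_gens_general {n : ℕ} (I : Set (Fin (n + 1) → ℕ))
    (hI : StronglyStable I) (d : ℕ) :
    Set.ncard {m : Fin (n + 1) → ℕ |
        mdeg m = d ∧ m ∉ I ∧ m + Pi.single (Fin.last n) 1 ∈ I} =
      Set.ncard {N : Fin (n + 1) → ℕ |
        MinGen I N ∧ maxVar N = n + 1 ∧ mdeg N = d + 1} := by
  have hgens : {N : Fin (n + 1) → ℕ | MinGen I N ∧ maxVar N = n + 1 ∧ mdeg N = d + 1} =
      (· + Pi.single (Fin.last n) 1) ''
        {m | mdeg m = d ∧ m ∉ I ∧ m + Pi.single (Fin.last n) 1 ∈ I} := by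
    ext N
    simp only [Set.mem_ofPred_eq, Set.mem_image, maxVar_eq_succ_iff, hI.1.minGen_iff]
    constructor
    · rintro ⟨⟨hN, hmin⟩, hlast, hdeg⟩
      have hsplit := sub_single_add_single hlast
      refine ⟨N - Pi.single (Fin.last n) 1, ⟨?_, hmin _ hlast, by rwa [hsplit]⟩, hsplit⟩
      have := congrArg mdeg hsplit
      rw [mdeg_add, mdeg_single] at this
      omega
    · rintro ⟨m, ⟨rfl, hm, hmx⟩, rfl⟩
      exact ⟨hI.1.minGen_iff.1 (hI.minGen_add_single_last hm hmx), by simp,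
        by rw [mdeg_add, mdeg_single]⟩
  rw [hgens, Set.ncard_image_of_injective _ (add_left_injective _)]

/-- `dim_k ((I : x_n)/I)_d` equals the number of minimal generators
`N` of `I` with `max N = n` and `deg N = d + 1`. -/
theorem colon_dim_eq_card_min_gens {n : ℕ} (I : Set (Fin (n + 1) → ℕ))
    (hI : StronglyStable I) (W : Fin (n + 1) → ℕ) (hW : IsLastGen I W)
    (hWn : maxVar W = n + 1) (d : ℕ) :
    Set.ncard {m : Fin (n + 1) → ℕ |
        mdeg m = d ∧ m ∉ I ∧ m + Pi.single (Fin.last n) 1 ∈ I} =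
      Set.ncard {N : Fin (n + 1) → ℕ |
        MinGen I N ∧ maxVar N = n + 1 ∧ mdeg N = d + 1} :=
  colon_dim_eq_card_min_gens_general I hI d
end

section
/- If I is a nonzero almost reverse lexicographic ideal in R = k[x_1,...,x_n] whose last generator M_ω has max M_ω = μ and N, M are minimal generators of I with max N < max M, then deg N ≤ deg M. -/
open scoped Classical

/-!
If `deg N > deg M`, cut `N` down to a divisor `N'` of degree `deg M`. Since `N'` involves
no variable of index `≥ max M`, it is larger than `M` in the reverse lexicographic order,
so the almost reverse lexicographic property puts `N'` in `I`; minimality of `N` then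
forces `N' = N`, contradicting the degrees.
-/

lemma exists_le_mdeg_eq {n : ℕ} (m : Fin n → ℕ) {d : ℕ} (hd : d ≤ mdeg m) :
    ∃ m' : Fin n → ℕ, (∀ i, m' i ≤ m i) ∧ mdeg m' = d := by
  induction d with
  | zero => exact ⟨0, fun _ => Nat.zero_le _, by simp [mdeg]⟩
  | succ d ih =>
    obtain ⟨m', hle, hdeg⟩ := ih (Nat.le_of_succ_le hd)
    obtain ⟨i, hi⟩ : ∃ i, m' i < m i := by
      by_contra! hc
      have : mdeg m ≤ mdeg m' := Finset.sum_le_sum fun i _ => hc i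
      omega
    refine ⟨m' + Pi.single i 1, fun j => ?_, ?_⟩
    · rcases eq_or_ne j i with rfl | hj
      · simpa using hi
      · simpa [hj] using hle j
    · simp [mdeg, Finset.sum_add_distrib, ← hdeg]

section maxVar

variable {n : ℕ} {m m' : Fin n → ℕ}

lemma le_maxVar {i : Fin n} (hi : 0 < m i) : i.1 + 1 ≤ maxVar m := by
  have := Finset.le_sup (f := fun i : Fin n => if 0 < m i then i.1 + 1 else 0)
    (Finset.mem_univ i)
  rwa [if_pos hi] at this

lemma eq_zero_of_maxVar_le {i : Fin n} (hi : maxVar m ≤ i.1) : m i = 0 := by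
  by_contra h
  have := le_maxVar (Nat.pos_of_ne_zero h)
  omega

lemma exists_maxVar_eq_succ (h : 0 < maxVar m) : ∃ i : Fin n, maxVar m = i.1 + 1 ∧ 0 < m i := by
  have : (Finset.univ : Finset (Fin n)).Nonempty := by
    obtain ⟨j, -, -⟩ := Finset.lt_sup_iff.mp h
    exact ⟨j, Finset.mem_univ j⟩
  obtain ⟨i, -, hi⟩ := Finset.exists_mem_eq_sup _ this
    (fun i : Fin n => if 0 < m i then i.1 + 1 else 0)
  have hmi : 0 < m i := by
    by_contra hc
    rw [maxVar, hi, if_neg hc] at h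
    exact h.false
  exact ⟨i, by rw [maxVar, hi, if_pos hmi], hmi⟩

lemma maxVar_mono (h : ∀ i, m' i ≤ m i) : maxVar m' ≤ maxVar m :=
  Finset.sup_mono_fun fun i _ => by
    have := h i
    split_ifs <;> omega

lemma revLexGT_of_maxVar_lt (hdeg : mdeg m' = mdeg m) (h : maxVar m' < maxVar m) :
    RevLexGT m' m := by
  obtain ⟨i, hi, hmi⟩ := exists_maxVar_eq_succ (Nat.zero_lt_of_lt h)
  refine Or.inr ⟨hdeg, i, fun j hij => ?_, ?_⟩
  · have : i.1 < j.1 := hij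
    rw [eq_zero_of_maxVar_le (m := m') (by omega), eq_zero_of_maxVar_le (m := m) (by omega)]
  · rwa [eq_zero_of_maxVar_le (m := m') (by omega)]

end maxVar

theorem arl_deg_mono_in_maxVar_general {n : ℕ} (I : Set (Fin n → ℕ))
    (hARL : ARL I)
    (N M : Fin n → ℕ) (hN : MinGen I N) (hM : MinGen I M)
    (h : maxVar N < maxVar M) : mdeg N ≤ mdeg M := by
  by_contra! hlt
  obtain ⟨N', hN'N, hdeg⟩ := exists_le_mdeg_eq N hlt.le
  have hgt : RevLexGT N' M :=
    revLexGT_of_maxVar_lt hdeg ((maxVar_mono hN'N).trans_lt h)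
  have hN'eq : N' = N := hN.2 N' (hARL N' M hM hdeg hgt) hN'N
  subst hN'eq
  exact hlt.ne' hdeg

/-- In a nonzero almost reverse lexicographic ideal, if `N, M` are
minimal generators with `max N < max M`, then `deg N ≤ deg M`. -/
theorem arl_deg_mono_in_maxVar {n μ : ℕ} (I : Set (Fin n → ℕ))
    (hne : I.Nonempty) (hI : MonIdeal I) (hARL : ARL I)
    (W : Fin n → ℕ) (hW : IsLastGen I W) (hμ : maxVar W = μ)
    (N M : Fin n → ℕ) (hN : MinGen I N) (hM : MinGen I M)
    (h : maxVar N < maxVar M) : mdeg N ≤ mdeg M :=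
  arl_deg_mono_in_maxVar_general I hARL N M hN hM h
end

section
/- Let g_• = |n; d_1,...,d_m| and h_• = |n; d_1,...,d_m, s| be Fröberg sequences with s ≥ 1, and suppose g_• is unimodal at each tail. If there exists i ≥ 1 with h_i ≤ h_{i-1}, then h_d ≤ h_{d-1} for all d ≥ i. -/
open scoped Classical

/-!
While both sequences are positive they are the coefficients of `G = Π (1 - z^{d_i}) / (1-z)^n`
and `H = (1 - z^s) G`, so the first differences satisfy `Δh_e = Δg_e - Δg_{e-s}`.

If `g` has started to decrease by degree `d`, unimodality of its tail gives `Δg_d ≤ 0`, and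
`h_d > 0` keeps `d - s` before the peak of `g`, so `Δg_{d-s} ≥ 0`. Otherwise `g` is strictly
increasing up to `d`, hence `Δg = g^{(1)}` there, and `h_i ≤ h_{i-1}` reads
`g^{(1)}_i ≤ g^{(1)}_{i-s}`: the sequence `g^{(1)}` has decreased by degree `i`, and unimodality
of its tail (covered by the hypothesis since `g_1 > g_0 = 1`) gives
`g^{(1)}_d ≤ g^{(1)}_i ≤ g^{(1)}_{i-s} ≤ g^{(1)}_{d-s}`, or directly `g^{(1)}_d ≤ g^{(1)}_{d-s}`
when `d - s` is already past the peak. Once `h` has reached a nonpositive coefficient the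
truncation makes it vanish from then on.
-/

open Set

/-- Coefficients of `z^s F(z)`. -/
def shiftBy (s : ℕ) (f : ℕ → ℤ) (e : ℕ) : ℤ := if s ≤ e then f (e - s) else 0

/-- Coefficients of `(1 - z) F(z)`, i.e. the backward difference with `f (-1) = 0`. -/
def bdiff (f : ℕ → ℤ) : ℕ → ℤ
  | 0 => f 0
  | e + 1 => f (e + 1) - f e

theorem bdiff_sub (f g : ℕ → ℤ) : bdiff (f - g) = bdiff f - bdiff g := by
  funext e
  cases e <;> simp only [bdiff, Pi.sub_apply, sub_sub_sub_comm]

theorem bdiff_shiftBy (s : ℕ) (f : ℕ → ℤ) : bdiff (shiftBy s f) = shiftBy s (bdiff f) := by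
  funext e
  cases e with
  | zero => by_cases hs : s = 0 <;> simp [bdiff, shiftBy, hs]
  | succ e =>
    rcases lt_trichotomy s (e + 1) with hs | rfl | hs
    · obtain ⟨k, rfl⟩ : ∃ k, e = s + k := ⟨e - s, by omega⟩
      simp only [bdiff, shiftBy, if_pos hs.le, if_pos (show s ≤ s + k by omega),
        show s + k + 1 - s = k + 1 by omega, Nat.add_sub_cancel_left]
    · simp [bdiff, shiftBy]
    · simp [bdiff, shiftBy, show ¬s ≤ e by omega, show ¬s ≤ e + 1 by omega]

theorem Set.EqOn.bdiff {f g : ℕ → ℤ} {d : ℕ} (h : EqOn f g (Iic d)) :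
    EqOn (bdiff f) (bdiff g) (Iic d) := by
  rintro (_ | e) he
  · exact h he
  · simp only [_root_.bdiff, h he, h (show e ∈ Iic d from (Nat.le_succ e).trans he)]

theorem le_pred_iff_bdiff_nonpos {f : ℕ → ℕ} {e : ℕ} (he : 1 ≤ e) :
    f e ≤ f (e - 1) ↔ bdiff (fun j => (f j : ℤ)) e ≤ 0 := by
  obtain ⟨k, rfl⟩ : ∃ k, e = k + 1 := ⟨e - 1, by omega⟩
  simp only [bdiff, Nat.add_sub_cancel, sub_nonpos, Nat.cast_le]

theorem bdiff_pos_of_strictMonoOn {g : ℕ → ℕ} {b : ℕ} (hg0 : 0 < g 0)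
    (hg : StrictMonoOn g (Iic b)) : 0 < bdiff (fun j => (g j : ℤ)) b := by
  cases b with
  | zero => simpa [bdiff] using hg0
  | succ k =>
    have : g k < g (k + 1) := hg (by simp) (by simp) (Nat.lt_succ_self k)
    simp only [bdiff, sub_pos, Nat.cast_lt, this]

theorem hseq_one_eq_bdiff {g : ℕ → ℕ} {d e : ℕ} (hg0 : g 0 = 1) (hg : StrictMonoOn g (Iic d))
    (he : e ≤ d) : (hseq g 1 e : ℤ) = bdiff (fun j => (g j : ℤ)) e := by
  cases e with
  | zero => simp [hseq, bdiff, hg0]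
  | succ k =>
    have : g k < g (k + 1) := hg (by simp; omega) he (Nat.lt_succ_self k)
    simp only [hseq, bdiff]
    omega

theorem exists_rset_le_or_strictMonoOn (h : ℕ → ℕ) (i b : ℕ) :
    (∃ r ∈ rset h i, r ≤ b) ∨ StrictMonoOn (hseq h i) (Iic b) := by
  refine or_iff_not_imp_left.2 fun hno => strictMonoOn_Iic_of_lt_succ fun m hm => ?_
  by_contra hle
  exact hno ⟨m + 1, ⟨by omega, by simpa using not_lt.1 hle⟩, Order.succ_le_of_lt hm⟩

theorem UnimodalAtTails.antitoneOn {h : ℕ → ℕ} (hh : UnimodalAtTails h) {i r : ℕ}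
    (hi : i < max 1 (h 1)) (hr : r ∈ rset h i) : AntitoneOn (hseq h i) {x | r - 1 ≤ x} :=
  antitoneOn_nat_Ici_of_succ_le fun e he =>
    hh i (Nat.sInf_le ⟨r, hr⟩) hi (e + 1) ⟨r, hr, by omega⟩

section UnimodalAtTails

variable {g : ℕ → ℕ} {r s i d : ℕ}

local notation "↑g" => fun j => ((g j : ℕ) : ℤ)

theorem UnimodalAtTails.bdiff_le_shiftBy_of_mem_rset_zero (hg : UnimodalAtTails g)
    (hg0 : 0 < g 0) (hr : r ∈ rset g 0) (hrd : r ≤ d) (hpos : shiftBy s ↑g d < g d) :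
    bdiff ↑g d ≤ shiftBy s (bdiff ↑g) d := by
  have hanti : AntitoneOn g {x | r - 1 ≤ x} := hg.antitoneOn (by simp) hr
  have hd : bdiff ↑g d ≤ 0 := by
    have hd1 : 1 ≤ d := hr.1.trans hrd
    rw [← le_pred_iff_bdiff_nonpos hd1]
    exact hanti (show r - 1 ≤ d - 1 by omega) (show r - 1 ≤ d by omega) (by omega)
  by_cases hsd : s ≤ d
  swap
  · simpa [shiftBy, hsd] using hd
  simp only [shiftBy, if_pos hsd] at hpos ⊢
  rcases exists_rset_le_or_strictMonoOn g 0 (d - s) with ⟨r', hr', hr'd⟩ | hmono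
  · have : g d ≤ g (d - s) :=
      hg.antitoneOn (by simp) hr' (show r' - 1 ≤ d - s by omega) (show r' - 1 ≤ d by omega)
        (by omega)
    exact absurd hpos (not_lt.2 (by exact_mod_cast this))
  · linarith [bdiff_pos_of_strictMonoOn (g := g) hg0 hmono]

theorem UnimodalAtTails.bdiff_le_shiftBy_of_strictMonoOn (hg : UnimodalAtTails g)
    (hg0 : g 0 = 1) (hmono : StrictMonoOn g (Iic d)) (hs : 1 ≤ s) (hi : 1 ≤ i) (hid : i ≤ d)
    (hdec : bdiff ↑g i ≤ shiftBy s (bdiff ↑g) i) :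
    bdiff ↑g d ≤ shiftBy s (bdiff ↑g) d := by
  have hsi : s ≤ i := by
    by_contra hsi
    have := bdiff_pos_of_strictMonoOn (by omega) (hmono.mono (Iic_subset_Iic.2 hid))
    simp only [shiftBy, if_neg hsi] at hdec
    linarith
  set f := hseq g 1
  have hf : ∀ e ≤ d, (f e : ℤ) = bdiff ↑g e := fun e he => hseq_one_eq_bdiff hg0 hmono he
  simp only [shiftBy, if_pos hsi, if_pos (hsi.trans hid)] at hdec ⊢
  rw [← hf i hid, ← hf (i - s) (by omega), Nat.cast_le] at hdec
  rw [← hf d le_rfl, ← hf (d - s) (by omega), Nat.cast_le]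
  have h1 : 1 < max 1 (g 1) := by
    have : g 0 < g 1 := hmono (show 0 ∈ Iic d by simp) (show 1 ∈ Iic d by simp; omega) one_pos
    exact lt_max_of_lt_right (by omega)
  obtain ⟨e₀, he₀, he₀i⟩ : ∃ r ∈ rset g 1, r ≤ i :=
    (exists_rset_le_or_strictMonoOn g 1 i).resolve_right fun hm =>
      (hm (show i - s ∈ Iic i by simp) (show i ∈ Iic i by simp) (by omega)).not_ge hdec
  rcases exists_rset_le_or_strictMonoOn g 1 (d - s) with ⟨r, hr, hrd⟩ | hm
  · exact hg.antitoneOn h1 hr (show r - 1 ≤ d - s by omega) (show r - 1 ≤ d by omega) (by omega)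
  · calc f d ≤ f i :=
          hg.antitoneOn h1 he₀ (show e₀ - 1 ≤ i by omega) (show e₀ - 1 ≤ d by omega) hid
      _ ≤ f (i - s) := hdec
      _ ≤ f (d - s) :=
          hm.monotoneOn (show i - s ∈ Iic (d - s) by simp; omega) self_mem_Iic (by omega)

theorem UnimodalAtTails.bdiff_sub_shiftBy_nonpos (hg : UnimodalAtTails g) (hg0 : g 0 = 1)
    (hs : 1 ≤ s) (hi : 1 ≤ i) (hid : i ≤ d) (hpos : 0 < (↑g - shiftBy s ↑g) d)
    (hdec : bdiff (↑g - shiftBy s ↑g) i ≤ 0) : bdiff (↑g - shiftBy s ↑g) d ≤ 0 := by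
  rw [Pi.sub_apply, sub_pos] at hpos
  rw [bdiff_sub, bdiff_shiftBy, Pi.sub_apply, sub_nonpos] at hdec ⊢
  rcases exists_rset_le_or_strictMonoOn g 0 d with ⟨r, hr, hrd⟩ | hmono
  · exact hg.bdiff_le_shiftBy_of_mem_rset_zero (hg0 ▸ one_pos) hr hrd hpos
  · exact hg.bdiff_le_shiftBy_of_strictMonoOn hg0 hmono hs hi hid hdec

end UnimodalAtTails

theorem froPoly_append (ds : List ℕ) (s : ℕ) :
    froPoly (ds ++ [s]) = froPoly ds * (1 - Polynomial.X ^ s) := by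
  simp [froPoly]

theorem froCoeff_zero (n : ℕ) (ds : List ℕ) : froCoeff n ds 0 = if 0 ∈ ds then 0 else 1 := by
  simp only [froCoeff, zero_add, Finset.sum_range_one, Nat.sub_self, Nat.choose_zero_right,
    Nat.cast_one, mul_one]
  induction ds with
  | nil => simp [froPoly]
  | cons a t ih =>
    rw [froPoly, List.map_cons, List.prod_cons, Polynomial.mul_coeff_zero, ← froPoly, ih]
    by_cases ha : a = 0 <;> simp [Polynomial.coeff_X_pow, ha, eq_comm]

theorem froCoeff_zero_pos_iff (n : ℕ) (ds : List ℕ) : 0 < froCoeff n ds 0 ↔ 0 ∉ ds := by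
  rw [froCoeff_zero]
  split_ifs with h <;> simp [h]

theorem froCoeff_append (n : ℕ) (ds : List ℕ) (s : ℕ) :
    froCoeff n (ds ++ [s]) = froCoeff n ds - shiftBy s (froCoeff n ds) := by
  funext i
  simp only [froCoeff, froPoly_append, mul_one_sub, Polynomial.coeff_sub,
    Polynomial.coeff_mul_X_pow', sub_mul, Finset.sum_sub_distrib, Pi.sub_apply, shiftBy]
  congr 1
  simp only [ite_mul, zero_mul]
  rw [← Finset.sum_filter]
  split_ifs with hsi
  · have hfil : (Finset.range (i + 1)).filter (s ≤ ·) = Finset.Ico s (i + 1) := by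
      ext x; simp [Finset.mem_Ico]; omega
    rw [hfil, Finset.sum_Ico_eq_sum_range, show i + 1 - s = i - s + 1 by omega]
    refine Finset.sum_congr rfl fun k _ => ?_
    rw [Nat.add_sub_cancel_left, show i - (s + k) = i - s - k by omega]
  · refine Finset.sum_eq_zero fun x hx => ?_
    simp only [Finset.mem_filter, Finset.mem_range] at hx
    omega

theorem froCoeff_pos_of_append {n s d : ℕ} {ds : List ℕ} (hs : 1 ≤ s)
    (h : ∀ j ≤ d, 0 < froCoeff n (ds ++ [s]) j) : ∀ j ≤ d, 0 < froCoeff n ds j := by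
  intro j
  induction j using Nat.strong_induction_on with
  | _ j ih =>
    intro hj
    have hH := h j hj
    rw [froCoeff_append, Pi.sub_apply, shiftBy] at hH
    split_ifs at hH with hsj
    · linarith [ih (j - s) (by omega) (by omega)]
    · linarith

theorem fro_zero_eq_one (n : ℕ) {ds : List ℕ} (h : 0 ∉ ds) : fro n ds 0 = 1 := by
  simp [fro, froCoeff_zero, h]

theorem fro_eqOn_froCoeff {n d : ℕ} {ds : List ℕ} (h : ∀ j ≤ d, 0 < froCoeff n ds j) :
    EqOn (fun j => (fro n ds j : ℤ)) (froCoeff n ds) (Iic d) := by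
  intro j (hj : j ≤ d)
  change (fro n ds j : ℤ) = _
  rw [fro, if_pos fun k hk => h k (hk.trans hj)]
  exact Int.toNat_of_nonneg (h j hj).le

theorem fro_append_eqOn {n s d : ℕ} {ds : List ℕ} (hs : 1 ≤ s)
    (h : ∀ j ≤ d, 0 < froCoeff n (ds ++ [s]) j) :
    EqOn (fun j => (fro n (ds ++ [s]) j : ℤ))
      ((fun j => (fro n ds j : ℤ)) - shiftBy s fun j => (fro n ds j : ℤ)) (Iic d) := by
  have hg : ∀ k ≤ d, (fro n ds k : ℤ) = froCoeff n ds k :=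
    fun k hk => fro_eqOn_froCoeff (froCoeff_pos_of_append hs h) hk
  intro j (hj : j ≤ d)
  rw [fro_eqOn_froCoeff h hj, froCoeff_append]
  simp only [Pi.sub_apply, shiftBy, hg j hj]
  split_ifs
  · rw [hg (j - s) ((Nat.sub_le j s).trans hj)]
  · rfl

theorem fro_once_decreasing_stays_decreasing_general (n : ℕ) (ds : List ℕ) (s : ℕ)
    (hg : UnimodalAtTails (fro n ds)) :
    ∀ i, 1 ≤ i → fro n (ds ++ [s]) i ≤ fro n (ds ++ [s]) (i - 1) →
      ∀ d, i ≤ d → fro n (ds ++ [s]) d ≤ fro n (ds ++ [s]) (d - 1) := by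
  intro i hi hdec d hid
  by_cases hpos : ∀ j ≤ d, 0 < froCoeff n (ds ++ [s]) j
  swap
  · simp [fro, hpos]
  obtain ⟨hds, hs⟩ : 0 ∉ ds ∧ s ≠ 0 := by
    simpa [froCoeff_zero_pos_iff, eq_comm] using hpos 0 (Nat.zero_le d)
  replace hs : 1 ≤ s := Nat.pos_of_ne_zero hs
  have hwin := fro_append_eqOn hs hpos
  rw [le_pred_iff_bdiff_nonpos hi, hwin.bdiff hid] at hdec
  rw [le_pred_iff_bdiff_nonpos (hi.trans hid), hwin.bdiff self_mem_Iic]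
  refine hg.bdiff_sub_shiftBy_nonpos (fro_zero_eq_one n hds) hs hi hid ?_ hdec
  rw [← hwin self_mem_Iic, fro_eqOn_froCoeff hpos self_mem_Iic]
  exact hpos d le_rfl

/-- If `g = |n; d_1,…,d_m|` is unimodal at each tail and
`h = |n; d_1,…,d_m, s|` satisfies `h_i ≤ h_{i-1}` for some `i ≥ 1`, then
`h_d ≤ h_{d-1}` for all `d ≥ i`. -/
theorem fro_once_decreasing_stays_decreasing (n : ℕ) (ds : List ℕ)
    (hds : ∀ d ∈ ds, 1 ≤ d) (s : ℕ) (hs : 1 ≤ s)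
    (hg : UnimodalAtTails (fro n ds)) :
    ∀ i, 1 ≤ i → fro n (ds ++ [s]) i ≤ fro n (ds ++ [s]) (i - 1) →
      ∀ d, i ≤ d → fro n (ds ++ [s]) d ≤ fro n (ds ++ [s]) (d - 1) :=
  fro_once_decreasing_stays_decreasing_general n ds s hg
end
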